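/- Under these hypotheses, for every vector v in the subspace Vₙ = span{ (Π_{i∈S} Bᵢ) ψ : S ⊆ {1,…,n} } and every i ∈ {1,…,n}, one has (AᵢBᵢ + BᵢAᵢ) v = 0; that is, the anticommutator {Aᵢ, Bᵢ} vanishes identically on Vₙ, so the compressions of Aᵢ and Bᵢ to Vₙ anticommute. -/

import Mathlib

/-- The product `Π_{i ∈ S} T i` of the operators `T i`, `i ∈ S`, multiplied in
increasing order of the index; all products used below are over pairwise commuting
operators, so the order of the factors is irrelevant. -/
noncomputable def prodOver {H : Type*} [NormedAddCommGroup H] [InnerProductSpace ℂ H]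
    {n : ℕ} (T : Fin n → H →L[ℂ] H) (S : Finset (Fin n)) : H →L[ℂ] H :=
  ((S.sort (· ≤ ·)).map T).prod

/-!
Applying `Aᵣ` to `Aᵣ (Π_{m ≠ r} B_m) ψ = ψ` gives `Aᵣ ψ = (Π_{m ≠ r} B_m) ψ`, so
`Bᵣ Aᵣ ψ = (Π_m B_m) ψ` does not depend on `r`. For distinct `p, t, q` put
`C = Π_{m ∉ {p,t,q}} B_m`; then `A_q C ψ = B_p B_t ψ`, and the triple relation
`A_p A_t A_q C ψ = -ψ` becomes `A_p B_p A_t B_t ψ = -ψ`, i.e. `A_t B_t ψ = -B_p A_p ψ = -B_t A_t ψ`.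
So the anticommutator `Kₜ = Aₜ Bₜ + Bₜ Aₜ` kills `ψ`. Because `Bₜ² = 1`, `Kₜ` commutes with `Bₜ`
as well as with every other `B_m`, hence with each product `Π_{m ∈ S} B_m`, and therefore kills
all of `Vₙ`.
-/

section ProdOver

variable {H : Type*} [NormedAddCommGroup H] [InnerProductSpace ℂ H] {n : ℕ}
  {A B : Fin n → H →L[ℂ] H}

theorem prodOver_eq_noncommProd (hB : Pairwise fun i j => Commute (B i) (B j))
    (S : Finset (Fin n)) : prodOver B S = S.noncommProd B (hB.set_pairwise _) := by
  rw [prodOver, ← Finset.noncommProd_toFinset _ B (by simpa using hB.set_pairwise _)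
    (S.sort_nodup _)]
  simp only [Finset.sort_toFinset]

theorem prodOver_singleton (a : Fin n) : prodOver B {a} = B a := by
  simp [prodOver]

theorem prodOver_insert (hB : Pairwise fun i j => Commute (B i) (B j)) {a : Fin n}
    {S : Finset (Fin n)} (ha : a ∉ S) : prodOver B (insert a S) = B a * prodOver B S := by
  simp only [prodOver_eq_noncommProd hB, Finset.noncommProd_insert_of_notMem _ _ _ _ ha]

theorem Commute.prodOver_right {T : H →L[ℂ] H} (hB : Pairwise fun i j => Commute (B i) (B j))
    {S : Finset (Fin n)} (hT : ∀ m ∈ S, Commute T (B m)) : Commute T (prodOver B S) := by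
  rw [prodOver_eq_noncommProd hB]
  exact Finset.noncommProd_commute _ _ _ _ hT

theorem prodOver_mul_self (hB : Pairwise fun i j => Commute (B i) (B j))
    (hB2 : ∀ i, B i * B i = 1) (S : Finset (Fin n)) : prodOver B S * prodOver B S = 1 := by
  rw [prodOver_eq_noncommProd hB,
    ← Finset.noncommProd_mul_distrib _ _ _ _ fun _ _ _ _ h => hB h]
  exact (Finset.noncommProd_eq_pow_card _ _ _ 1 fun i _ => hB2 i).trans (one_pow _)

theorem commute_anticommutator_of_mul_self_eq_one {R : Type*} [Ring R] {a b : R}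
    (hb : b * b = 1) : Commute (a * b + b * a) b := by
  simp only [Commute, SemiconjBy, add_mul, mul_add, mul_assoc, hb, mul_one]
  rw [← mul_assoc b b a, hb, one_mul, add_comm]

theorem commute_anticommutator_prodOver (hB2 : ∀ i, B i * B i = 1)
    (hAB : ∀ i j, i ≠ j → Commute (A i) (B j)) (hBB : Pairwise fun i j => Commute (B i) (B j))
    (i : Fin n) (S : Finset (Fin n)) : Commute (A i * B i + B i * A i) (prodOver B S) := by
  refine Commute.prodOver_right hBB fun m _ => ?_
  obtain rfl | hm := eq_or_ne i m
  · exact commute_anticommutator_of_mul_self_eq_one (hB2 i)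
  · exact ((hAB i m hm).mul_left (hBB hm)).add_left ((hBB hm).mul_left (hAB i m hm))

end ProdOver

section MaximalViolation

open Finset

variable {H : Type*} [NormedAddCommGroup H] [InnerProductSpace ℂ H] {n : ℕ}
  {A B : Fin n → H →L[ℂ] H} {ψ : H}

theorem apply_eq_prodOver_erase (hA2 : ∀ i, A i * A i = 1)
    (hplus : ∀ i, A i (prodOver B (univ.erase i) ψ) = ψ) (r : Fin n) :
    A r ψ = prodOver B (univ.erase r) ψ := by
  have h := congrArg (A r) (hplus r)
  rwa [← mul_apply_eq_comp, hA2, one_apply_eq_self, eq_comm] at h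

theorem mul_apply_eq_prodOver_univ (hA2 : ∀ i, A i * A i = 1)
    (hBB : Pairwise fun i j => Commute (B i) (B j))
    (hplus : ∀ i, A i (prodOver B (univ.erase i) ψ) = ψ) (r : Fin n) :
    (B r * A r) ψ = prodOver B univ ψ := by
  rw [mul_apply_eq_comp, apply_eq_prodOver_erase hA2 hplus, ← mul_apply_eq_comp,
    ← prodOver_insert hBB (notMem_erase r _), insert_erase (mem_univ r)]

theorem mul_apply_eq_neg_mul_apply (hA2 : ∀ i, A i * A i = 1) (hB2 : ∀ i, B i * B i = 1)
    (hAA : Pairwise fun i j => Commute (A i) (A j))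
    (hAB : ∀ i j, i ≠ j → Commute (A i) (B j))
    (hBB : Pairwise fun i j => Commute (B i) (B j))
    (hplus : ∀ i, A i (prodOver B (univ.erase i) ψ) = ψ)
    (hminus : ∀ S : Finset (Fin n), S.card = 3 → prodOver A S (prodOver B Sᶜ ψ) = -ψ)
    {p t q : Fin n} (hpt : p ≠ t) (hpq : p ≠ q) (htq : t ≠ q) :
    (A t * B t) ψ = -(B p * A p) ψ := by
  set S : Finset (Fin n) := {p, t, q}
  set C := prodOver B Sᶜ
  have commute_C {T : H →L[ℂ] H} (r : Fin n) (hr : r ∈ S)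
      (hT : ∀ m, r ≠ m → Commute T (B m)) : Commute T C :=
    Commute.prodOver_right hBB fun m hm => hT m fun h => mem_compl.mp hm (h ▸ hr)
  have hAq : A q ψ = (B p * B t * C) ψ := by
    have : univ.erase q = insert p (insert t Sᶜ) := by ext; simp [S]; grind
    rw [apply_eq_prodOver_erase hA2 hplus, this, prodOver_insert hBB (by simp [S, hpt]),
      prodOver_insert hBB (by simp [S]), mul_assoc]
  have hAqC : (A q * C) ψ = (B p * B t) ψ := by
    have hC : Commute C (B p * B t) :=
      ((commute_C p (by simp [S]) fun _ h => hBB h).mul_left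
        (commute_C t (by simp [S]) fun _ h => hBB h)).symm
    rw [(commute_C q (by simp [S]) (hAB q)).eq, mul_apply_eq_comp, hAq, ← mul_apply_eq_comp,
      ← mul_assoc, hC.eq, mul_assoc, prodOver_mul_self hBB hB2, mul_one]
  have hAS : prodOver A S = A p * A t * A q := by
    rw [prodOver_insert hAA (by simp [hpt, hpq]), prodOver_insert hAA (by simpa using htq),
      prodOver_singleton, mul_assoc]
  have key : (A p * B p * (A t * B t)) ψ = -ψ := calc
    _ = (A p * A t) ((B p * B t) ψ) := by
      rw [← mul_apply_eq_comp]; congr 1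
      rw [mul_assoc, ← mul_assoc (B p), ← (hAB t p hpt.symm).eq]; noncomm_ring
    _ = -ψ := by
      rw [← hAqC, ← mul_apply_eq_comp,
        ← hminus S (card_eq_three.mpr ⟨p, t, q, hpt, hpq, htq, rfl⟩), hAS]
      simp only [mul_apply_eq_comp]; rfl
  have hBA : (B p * A p) * (A p * B p) = 1 := by
    rw [mul_assoc, ← mul_assoc (A p), hA2, one_mul, hB2]
  rw [← one_mul (A t * B t), ← hBA, mul_assoc, mul_apply_eq_comp, key, map_neg]

theorem anticommutator_apply_eq_zero (hn : 3 ≤ n) (hA2 : ∀ i, A i * A i = 1)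
    (hB2 : ∀ i, B i * B i = 1) (hAA : Pairwise fun i j => Commute (A i) (A j))
    (hAB : ∀ i j, i ≠ j → Commute (A i) (B j)) (hBB : Pairwise fun i j => Commute (B i) (B j))
    (hplus : ∀ i, A i (prodOver B (univ.erase i) ψ) = ψ)
    (hminus : ∀ S : Finset (Fin n), S.card = 3 → prodOver A S (prodOver B Sᶜ ψ) = -ψ)
    (t : Fin n) : (A t * B t + B t * A t) ψ = 0 := by
  obtain ⟨p, hp, q, hq, hpq⟩ : ∃ p ∈ univ.erase t, ∃ q ∈ univ.erase t, p ≠ q := by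
    rw [← one_lt_card, card_erase_of_mem (mem_univ t), card_univ, Fintype.card_fin]; omega
  rw [add_apply, mul_apply_eq_neg_mul_apply hA2 hB2 hAA hAB hBB hplus hminus
      (ne_of_mem_erase hp) hpq (ne_of_mem_erase hq).symm,
    mul_apply_eq_prodOver_univ hA2 hBB hplus, mul_apply_eq_prodOver_univ hA2 hBB hplus,
    neg_add_cancel]

end MaximalViolation

theorem stmt11_general {H : Type*} [NormedAddCommGroup H] [InnerProductSpace ℂ H]
    (n : ℕ) (hn : 3 ≤ n)
    (A B : Fin n → H →L[ℂ] H)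
    (hAinv : ∀ i (x : H), A i (A i x) = x)
    (hBinv : ∀ i (x : H), B i (B i x) = x)
    (hAA : ∀ i j, i ≠ j → ∀ x : H, A i (A j x) = A j (A i x))
    (hAB : ∀ i j, i ≠ j → ∀ x : H, A i (B j x) = B j (A i x))
    (hBB : ∀ i j, i ≠ j → ∀ x : H, B i (B j x) = B j (B i x))
    (ψ : H)
    (hplus : ∀ i, A i (prodOver B (Finset.univ.erase i) ψ) = ψ)
    (hminus : ∀ S : Finset (Fin n), S.card = 3 →
      prodOver A S (prodOver B Sᶜ ψ) = -ψ)
    (V : Submodule ℂ H)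
    (hV : V = Submodule.span ℂ {v : H | ∃ S : Finset (Fin n), v = prodOver B S ψ}) :
    ∀ v ∈ V, ∀ i, A i (B i v) + B i (A i v) = 0 := by
  have hA2 (i) : A i * A i = 1 := ContinuousLinearMap.ext (hAinv i)
  have hB2 (i) : B i * B i = 1 := ContinuousLinearMap.ext (hBinv i)
  have hAAc : Pairwise fun i j => Commute (A i) (A j) := fun i j h =>
    ContinuousLinearMap.ext (hAA i j h)
  have hABc (i j) (h : i ≠ j) : Commute (A i) (B j) := ContinuousLinearMap.ext (hAB i j h)
  have hBBc : Pairwise fun i j => Commute (B i) (B j) := fun i j h =>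
    ContinuousLinearMap.ext (hBB i j h)
  intro v hv i
  have hVK : V ≤ LinearMap.ker ((A i * B i + B i * A i : H →L[ℂ] H) : H →ₗ[ℂ] H) := by
    rw [hV, Submodule.span_le]
    rintro _ ⟨S, rfl⟩
    rw [SetLike.mem_coe, LinearMap.mem_ker, ContinuousLinearMap.coe_coe, ← mul_apply_eq_comp,
      (commute_anticommutator_prodOver hB2 hABc hBBc i S).eq, mul_apply_eq_comp,
      anticommutator_apply_eq_zero hn hA2 hB2 hAAc hABc hBBc hplus hminus, map_zero]
  exact hVK hv

/-- under the maximal-violation hypotheses for `Iₙ` (setup as in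
Statement 9), for every vector `v` in
`Vₙ = span{(Π_{i∈S} Bᵢ)ψ : S ⊆ {1,…,n}}` and every `i` one has
`(AᵢBᵢ + BᵢAᵢ) v = 0`: the anticommutator `{Aᵢ, Bᵢ}` vanishes identically on `Vₙ`,
so the compressions of `Aᵢ` and `Bᵢ` to `Vₙ` anticommute. -/
theorem stmt11 {H : Type*} [NormedAddCommGroup H] [InnerProductSpace ℂ H]
    (n : ℕ) (hn : 3 ≤ n)
    (A B : Fin n → H →L[ℂ] H)
    (hAsa : ∀ i (x y : H), (inner ℂ (A i x) y : ℂ) = inner ℂ x (A i y))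
    (hBsa : ∀ i (x y : H), (inner ℂ (B i x) y : ℂ) = inner ℂ x (B i y))
    (hAinv : ∀ i (x : H), A i (A i x) = x)
    (hBinv : ∀ i (x : H), B i (B i x) = x)
    (hAA : ∀ i j, i ≠ j → ∀ x : H, A i (A j x) = A j (A i x))
    (hAB : ∀ i j, i ≠ j → ∀ x : H, A i (B j x) = B j (A i x))
    (hBB : ∀ i j, i ≠ j → ∀ x : H, B i (B j x) = B j (B i x))
    (ψ : H) (hψ : ‖ψ‖ = 1)
    (hplus : ∀ i, A i (prodOver B (Finset.univ.erase i) ψ) = ψ)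
    (hminus : ∀ S : Finset (Fin n), S.card = 3 →
      prodOver A S (prodOver B Sᶜ ψ) = -ψ)
    (V : Submodule ℂ H)
    (hV : V = Submodule.span ℂ {v : H | ∃ S : Finset (Fin n), v = prodOver B S ψ}) :
    ∀ v ∈ V, ∀ i, A i (B i v) + B i (A i v) = 0 :=
  stmt11_general n hn A B hAinv hBinv hAA hAB hBB ψ hplus hminus V hV
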